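/- arXiv:2605.14599 — 4 statements merged into one kernel-verified Lean document; each statement's English description precedes it below -/
import Mathlib

section
/- Population-level equivalence of MLE and Min-Max-IRL (Theorem 1, part 1, population level): Let π^E be any Markov policy (the expert). Define the population MLE risk L^MLE(π) := E_{τ∼P^{π^E}}[ −Σ_{t=1}^T log π_t(a_t|s_t) ] (for policies π whose kernels have ν-densities) and the population Min-Max-IRL risk L^IRL(r) := J*(r) − E_{τ∼P^{π^E}}[ Σ_{t=1}^T r_t(s_t,a_t) ]. Then for every bounded measurable reward r, L^MLE(π*_r) = β^{−1} L^IRL(r). In particular, over any reward class R, minimizing L^IRL over R and minimizing L^MLE over the class Π*(R) = {π*_r : r ∈ R} have the same minimizers under the map r ↦ π*_r. -/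
open MeasureTheory ProbabilityTheory Real
open scoped ENNReal RealInnerProductSpace

noncomputable section

namespace IRL

variable {S A : Type*} [MeasurableSpace S] [MeasurableSpace A]

/-- A reward tuple `(r_t)` of bounded measurable functions. -/
def IsBddReward (r : ℕ → S → A → ℝ) : Prop :=
  ∀ t, Measurable (fun q : S × A => r t q.1 q.2) ∧ ∃ C, ∀ s a, |r t s a| ≤ C

/-- `p` is a family of `ν`-probability densities of a Markov policy. -/
def IsPolicyDensity (ν : Measure A) (p : ℕ → S → A → ℝ) : Prop :=
  (∀ t, Measurable (fun q : S × A => p t q.1 q.2)) ∧ (∀ t s a, 0 ≤ p t s a) ∧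
    (∀ t s, ∫ a, p t s a ∂ν = 1)

/-- the log-densities `log π_t` are bounded (in particular the densities are positive). -/
def HasBddLogDensity (p : ℕ → S → A → ℝ) : Prop :=
  ∀ t, (∀ s a, 0 < p t s a) ∧ ∃ C, ∀ s a, |Real.log (p t s a)| ≤ C

variable (T : ℕ) (P : ℕ → Kernel (S × A) S) (ν : Measure A)

/-- Soft-optimal value function `V*_{t,r}` (backward recursion, `V* t ≡ 0` for `t > T`). -/
def Vstar (β : ℝ) (r : ℕ → S → A → ℝ) (t : ℕ) (s : S) : ℝ :=
  if T < t then 0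
  else β * Real.log (∫ a, Real.exp ((r t s a + ∫ s', Vstar β r (t + 1) s' ∂(P t (s, a))) / β) ∂ν)
termination_by T + 1 - t
decreasing_by omega

/-- Soft-optimal state-action value `Q*_{t,r}`. -/
def Qstar (β : ℝ) (r : ℕ → S → A → ℝ) (t : ℕ) (s : S) (a : A) : ℝ :=
  r t s a + ∫ s', Vstar T P ν β r (t + 1) s' ∂(P t (s, a))

/-- `ν`-density of the soft-optimal policy `π*_r`. -/
def piStar (β : ℝ) (r : ℕ → S → A → ℝ) (t : ℕ) (s : S) (a : A) : ℝ :=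
  Real.exp ((Qstar T P ν β r t s a - Vstar T P ν β r t s) / β)

/-- Value function `V^π_{t,r}` of a policy given by densities `p` (with `β = 0` this is the
unregularized value function `V^{π,0}`). -/
def Vpol (β : ℝ) (p r : ℕ → S → A → ℝ) (t : ℕ) (s : S) : ℝ :=
  if T < t then 0
  else ∫ a,
    (r t s a + (∫ s', Vpol β p r (t + 1) s' ∂(P t (s, a))) - β * Real.log (p t s a)) * p t s a ∂ν
termination_by T + 1 - t
decreasing_by omega

/-- `Q^π_{t,r}` for a policy given by densities `p`. -/
def Qpol (β : ℝ) (p r : ℕ → S → A → ℝ) (t : ℕ) (s : S) (a : A) : ℝ :=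
  r t s a + ∫ s', Vpol T P ν β p r (t + 1) s' ∂(P t (s, a))

/-- Regularized advantage `A^π_{t,r}(s,a) = Q^π - V^π - β log π_t(a|s)`. -/
def Apol (β : ℝ) (p r : ℕ → S → A → ℝ) (t : ℕ) (s : S) (a : A) : ℝ :=
  Qpol T P ν β p r t s a - Vpol T P ν β p r t s - β * Real.log (p t s a)

variable (P0 : Measure S)

/-- Optimal value `J*(r) = ∫ V*_{1,r} dP₀`. -/
def Jstar (β : ℝ) (r : ℕ → S → A → ℝ) : ℝ := ∫ s, Vstar T P ν β r 1 s ∂P0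

/-- Expected (regularized) return `J(r,π)` of a density policy. -/
def Jpol (β : ℝ) (p r : ℕ → S → A → ℝ) : ℝ := ∫ s, Vpol T P ν β p r 1 s ∂P0

/-- Iterated expectation, from time `t` in state `s`, of a trajectory functional `g` under a
(kernel) Markov policy `π`; coordinates of the trajectory outside `{1,…,T}` are irrelevant
junk values. -/
def polExp [Nonempty S] [Nonempty A] (pol : ℕ → Kernel S A) (g : (ℕ → S × A) → ℝ) (t : ℕ)
    (s : S) : ℝ :=
  if T < t then g (fun _ => (Classical.arbitrary S, Classical.arbitrary A))
  else ∫ a, ∫ s', polExp pol (fun τ => g (Function.update τ t (s, a))) (t + 1) s' ∂(P t (s, a))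
    ∂(pol t s)
termination_by T + 1 - t
decreasing_by omega

/-- `μ` is the trajectory law `P^π` of the Markov policy `π` (with initial distribution `P₀`),
characterized through integrals of all bounded measurable trajectory functionals. -/
def IsTrajLaw [Nonempty S] [Nonempty A] (pol : ℕ → Kernel S A) (μ : Measure (ℕ → S × A)) : Prop :=
  IsProbabilityMeasure μ ∧
    ∀ g : (ℕ → S × A) → ℝ, Measurable g → (∃ C, ∀ τ, |g τ| ≤ C) →
      ∫ τ, g τ ∂μ = ∫ s, polExp T P pol g 1 s ∂P0

/-- The kernel `s ↦ p t s ⬝ ν` of a policy given by densities. -/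
def densKernel [IsFiniteMeasure ν] (p : ℕ → S → A → ℝ) (t : ℕ) : Kernel S A :=
  Kernel.withDensity (Kernel.const S ν) fun s a => ENNReal.ofReal (p t s a)

open Classical in
/-- Kullback–Leibler divergence `∫ log (dμ/dμ') dμ` if `μ ≪ μ'` (`∞` otherwise). -/
def KL {X : Type*} [MeasurableSpace X] (μ μ' : Measure X) : ℝ≥0∞ :=
  if μ ≪ μ' ∧ Integrable (fun x => Real.log (μ.rnDeriv μ' x).toReal) μ then
    ENNReal.ofReal (∫ x, Real.log (μ.rnDeriv μ' x).toReal ∂μ)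
  else ⊤

/-- Squared Hellinger distance, computed with the dominating measure `μ + μ'`. -/
def sqHellinger {X : Type*} [MeasurableSpace X] (μ μ' : Measure X) : ℝ :=
  ∫ x, (Real.sqrt ((μ.rnDeriv (μ + μ') x).toReal)
      - Real.sqrt ((μ'.rnDeriv (μ + μ') x).toReal)) ^ 2 ∂(μ + μ')

/-- Second directional derivative. -/
def D2 {E : Type*} [NormedAddCommGroup E] [NormedSpace ℝ E] (F : E → ℝ) (θ ξ ζ : E) : ℝ :=
  fderiv ℝ (fun x => fderiv ℝ F x ζ) θ ξ

/-- Third directional derivative. -/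
def D3 {E : Type*} [NormedAddCommGroup E] [NormedSpace ℝ E] (F : E → ℝ) (θ ξ ζ ω : E) : ℝ :=
  fderiv ℝ (fun x => D2 F x ζ ω) θ ξ

end IRL

/-!
Since `π*_r = exp ((Q*_r - V*_r) / β)` and `Q*_{t,r} = r_t + P_t V*_{t+1,r}`, the MLE loss of
`π*_r` along a trajectory is `β⁻¹` times `∑ₜ (V*_{t,r}(s_t) - P_t V*_{t+1,r}(s_t, a_t)) - ∑ₜ r_t`.
Under any trajectory law the first sum telescopes in expectation to `∫ V*_{1,r} dP₀ = J*(r)`,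
whatever policy generated the actions; the minimizers agree because `β⁻¹ > 0`.
-/

namespace IRL

section BddMeasurable

variable {X Y : Type*} [MeasurableSpace X] [MeasurableSpace Y]

def IsBddMeasurable (f : X → ℝ) : Prop :=
  Measurable f ∧ ∃ C, ∀ x, |f x| ≤ C

theorem isBddMeasurable_const (c : ℝ) : IsBddMeasurable fun _ : X => c :=
  ⟨measurable_const, |c|, fun _ => le_rfl⟩

namespace IsBddMeasurable

variable {f g : X → ℝ}

theorem integrable (hf : IsBddMeasurable f) (μ : Measure X) [IsFiniteMeasure μ] :
    Integrable f μ :=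
  let ⟨hm, C, hC⟩ := hf
  .of_bound hm.aestronglyMeasurable C (.of_forall fun x => (Real.norm_eq_abs _).trans_le (hC x))

theorem comp (hf : IsBddMeasurable f) {φ : Y → X} (hφ : Measurable φ) :
    IsBddMeasurable (f ∘ φ) :=
  let ⟨hm, C, hC⟩ := hf
  ⟨hm.comp hφ, C, fun y => hC (φ y)⟩

theorem add (hf : IsBddMeasurable f) (hg : IsBddMeasurable g) :
    IsBddMeasurable fun x => f x + g x :=
  let ⟨hfm, C, hC⟩ := hf
  let ⟨hgm, D, hD⟩ := hg
  ⟨hfm.add hgm, C + D, fun x => (abs_add_le _ _).trans (add_le_add (hC x) (hD x))⟩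

theorem sub (hf : IsBddMeasurable f) (hg : IsBddMeasurable g) :
    IsBddMeasurable fun x => f x - g x :=
  let ⟨hfm, C, hC⟩ := hf
  let ⟨hgm, D, hD⟩ := hg
  ⟨hfm.sub hgm, C + D, fun x => (abs_sub _ _).trans (add_le_add (hC x) (hD x))⟩

theorem finset_sum {ι : Type*} (s : Finset ι) {f : ι → X → ℝ}
    (hf : ∀ i ∈ s, IsBddMeasurable (f i)) : IsBddMeasurable fun x => ∑ i ∈ s, f i x := by
  classical
  induction s using Finset.induction_on with
  | empty => simpa using isBddMeasurable_const (X := X) 0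
  | insert i s hi ih =>
    simp only [Finset.sum_insert hi]
    exact (hf i (s.mem_insert_self i)).add (ih fun j hj => hf j (Finset.mem_insert_of_mem hj))

theorem integral_kernel (hf : IsBddMeasurable f) (κ : Kernel Y X) [IsMarkovKernel κ] :
    IsBddMeasurable fun y => ∫ x, f x ∂(κ y) :=
  let ⟨hm, C, hC⟩ := hf
  ⟨hm.stronglyMeasurable.integral_kernel.measurable, C, fun y => by
    simpa using norm_integral_le_of_norm_le_const (μ := κ y)
      (.of_forall fun x => (Real.norm_eq_abs _).trans_le (hC x))⟩

end IsBddMeasurable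

theorem abs_log_integral_exp_sub_log_measureReal_le {ν : Measure Y} [IsFiniteMeasure ν]
    [NeZero ν] {g : Y → ℝ} (hg : Measurable g) {M : ℝ} (hM : ∀ y, |g y| ≤ M) :
    |Real.log (∫ y, Real.exp (g y) ∂ν) - Real.log (ν.real Set.univ)| ≤ M := by
  have hν₀ : 0 < ν.real Set.univ := measureReal_univ_pos
  have hint : Integrable (fun y => Real.exp (g y)) ν :=
    IsBddMeasurable.integrable ⟨hg.exp, Real.exp M, fun y => by
      rw [abs_of_pos (Real.exp_pos _)]; exact Real.exp_le_exp.2 (le_of_abs_le (hM y))⟩ ν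
  have hlow : ν.real Set.univ * Real.exp (-M) ≤ ∫ y, Real.exp (g y) ∂ν := by
    simpa [mul_comm] using integral_mono (integrable_const _) hint
      fun y => Real.exp_le_exp.2 (neg_le_of_abs_le (hM y))
  have hup : ∫ y, Real.exp (g y) ∂ν ≤ ν.real Set.univ * Real.exp M := by
    simpa [mul_comm] using integral_mono hint (integrable_const _)
      fun y => Real.exp_le_exp.2 (le_of_abs_le (hM y))
  have hlow' := Real.log_le_log (by positivity) hlow
  have hup' := Real.log_le_log ((mul_pos hν₀ (Real.exp_pos _)).trans_le hlow) hup
  rw [Real.log_mul hν₀.ne' (Real.exp_pos _).ne', Real.log_exp] at hlow' hup'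
  rw [abs_sub_le_iff]
  constructor <;> linarith

theorem IsBddMeasurable.logIntegralExp {ν : Measure Y} [IsFiniteMeasure ν] [NeZero ν]
    {β : ℝ} (hβ : 0 < β) {f : X × Y → ℝ} (hf : IsBddMeasurable f) :
    IsBddMeasurable fun x => β * Real.log (∫ y, Real.exp (f (x, y) / β) ∂ν) := by
  obtain ⟨hm, M, hM⟩ := hf
  refine ⟨?_, β * |Real.log (ν.real Set.univ)| + M, fun x => ?_⟩
  · exact measurable_const.mul
      ((hm.div_const β).exp.stronglyMeasurable.integral_prod_right' (ν := ν)).measurable.log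
  have hx := abs_log_integral_exp_sub_log_measureReal_le (ν := ν) (g := fun y => f (x, y) / β)
    ((hm.comp measurable_prodMk_left).div_const β) (M := M / β) fun y => by
      rw [abs_div, abs_of_pos hβ]; exact div_le_div_of_nonneg_right (hM (x, y)) hβ.le
  calc |β * Real.log (∫ y, Real.exp (f (x, y) / β) ∂ν)|
      = β * |Real.log (∫ y, Real.exp (f (x, y) / β) ∂ν)| := by rw [abs_mul, abs_of_pos hβ]
    _ ≤ β * (|Real.log (ν.real Set.univ)| + M / β) := by
      gcongr; linarith [abs_sub_abs_le_abs_sub (Real.log (∫ y, Real.exp (f (x, y) / β) ∂ν))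
        (Real.log (ν.real Set.univ))]
    _ = β * |Real.log (ν.real Set.univ)| + M := by field_simp

end BddMeasurable

section SoftOptimal

variable {S A : Type*} [MeasurableSpace S] [MeasurableSpace A]
  {T : ℕ} {P : ℕ → Kernel (S × A) S} {ν : Measure A} {β : ℝ} {r : ℕ → S → A → ℝ}

def stepDefect (P : ℕ → Kernel (S × A) S) (V : ℕ → S → ℝ) (u : ℕ) (q : S × A) : ℝ :=
  V u q.1 - ∫ s', V (u + 1) s' ∂(P u q)

theorem IsBddReward.isBddMeasurable (hr : IsBddReward r) (t : ℕ) :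
    IsBddMeasurable fun q : S × A => r t q.1 q.2 :=
  let ⟨hm, C, hC⟩ := hr t
  ⟨hm, C, fun q => hC q.1 q.2⟩

theorem isBddMeasurable_stepDefect [∀ t, IsMarkovKernel (P t)] {V : ℕ → S → ℝ}
    (hV : ∀ t, IsBddMeasurable (V t)) (u : ℕ) : IsBddMeasurable (stepDefect P V u) :=
  ((hV u).comp measurable_fst).sub ((hV (u + 1)).integral_kernel (P u))

theorem Vstar_of_lt {t : ℕ} (ht : T < t) (s : S) : Vstar T P ν β r t s = 0 := by
  rw [Vstar.eq_def, if_pos ht]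

theorem Vstar_of_le {t : ℕ} (ht : t ≤ T) (s : S) :
    Vstar T P ν β r t s = β * Real.log (∫ a, Real.exp (Qstar T P ν β r t s a / β) ∂ν) := by
  rw [Vstar.eq_def, if_neg (not_lt.2 ht)]
  rfl

theorem isBddMeasurable_Vstar [∀ t, IsMarkovKernel (P t)] [IsFiniteMeasure ν] [NeZero ν]
    (hβ : 0 < β) (hr : IsBddReward r) (t : ℕ) : IsBddMeasurable (Vstar T P ν β r t) := by
  by_cases ht : T < t
  · rw [funext (Vstar_of_lt ht)]
    exact isBddMeasurable_const 0
  · have hQ : IsBddMeasurable fun q : S × A => Qstar T P ν β r t q.1 q.2 :=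
      (hr.isBddMeasurable t).add ((isBddMeasurable_Vstar hβ hr (t + 1)).integral_kernel (P t))
    rw [funext (Vstar_of_le (not_lt.1 ht))]
    exact hQ.logIntegralExp hβ
termination_by T + 1 - t

theorem neg_log_piStar (t : ℕ) (s : S) (a : A) :
    -Real.log (piStar T P ν β r t s a)
      = β⁻¹ * (stepDefect P (Vstar T P ν β r) t (s, a) - r t s a) := by
  rw [piStar, Real.log_exp, Qstar, stepDefect]
  ring

end SoftOptimal

section Trajectory

variable {S A : Type*} [MeasurableSpace S] [MeasurableSpace A] [Nonempty S] [Nonempty A]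
  {T : ℕ} {P : ℕ → Kernel (S × A) S} {pol : ℕ → Kernel S A}

theorem polExp_of_lt {g : (ℕ → S × A) → ℝ} {t : ℕ} (ht : T < t) (s : S) :
    polExp T P pol g t s = g fun _ => (Classical.arbitrary S, Classical.arbitrary A) := by
  rw [polExp.eq_def, if_pos ht]

theorem polExp_of_le {g : (ℕ → S × A) → ℝ} {t : ℕ} (ht : t ≤ T) (s : S) :
    polExp T P pol g t s = ∫ a, ∫ s', polExp T P pol (fun τ => g (Function.update τ t (s, a)))
      (t + 1) s' ∂(P t (s, a)) ∂(pol t s) := by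
  rw [polExp.eq_def, if_neg (not_lt.2 ht)]

theorem polExp_const_add_sum_stepDefect [∀ t, IsMarkovKernel (P t)] [∀ t, IsMarkovKernel (pol t)]
    {V : ℕ → S → ℝ} (hV : ∀ t, IsBddMeasurable (V t)) (hVT : ∀ t, T < t → V t = 0)
    (t : ℕ) (c : ℝ) (s : S) :
    polExp T P pol (fun τ => c + ∑ u ∈ Finset.Icc t T, stepDefect P V u (τ u)) t s
      = c + V t s := by
  by_cases ht : T < t
  · simp [polExp_of_lt ht, hVT t ht, Finset.Icc_eq_empty_of_lt ht]
  rw [polExp_of_le (not_lt.1 ht)]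
  have hstep : ∀ a, ∫ s', polExp T P pol
      (fun τ => c + ∑ u ∈ Finset.Icc t T, stepDefect P V u (Function.update τ t (s, a) u))
        (t + 1) s' ∂(P t (s, a)) = c + V t s := by
    intro a
    have hsplit : ∀ τ : ℕ → S × A,
        c + ∑ u ∈ Finset.Icc t T, stepDefect P V u (Function.update τ t (s, a) u)
          = (c + stepDefect P V t (s, a)) + ∑ u ∈ Finset.Icc (t + 1) T, stepDefect P V u (τ u) := by
      intro τ
      rw [← Finset.add_sum_Ioc_eq_sum_Icc (not_lt.1 ht), ← Finset.Icc_add_one_left_eq_Ioc,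
        Function.update_self, add_assoc]
      congr 2
      refine Finset.sum_congr rfl fun u hu => ?_
      rw [Function.update_of_ne (by grind)]
    simp_rw [hsplit, polExp_const_add_sum_stepDefect hV hVT (t + 1)]
    rw [integral_add (integrable_const _) ((hV (t + 1)).integrable _), integral_const]
    simp only [probReal_univ, one_smul, stepDefect]
    ring
  simp [hstep]
termination_by T + 1 - t

theorem IsTrajLaw.integral_sum_stepDefect [∀ t, IsMarkovKernel (P t)]
    [∀ t, IsMarkovKernel (pol t)] {P0 : Measure S} {μ : Measure (ℕ → S × A)}
    (hμ : IsTrajLaw T P P0 pol μ) {V : ℕ → S → ℝ} (hV : ∀ t, IsBddMeasurable (V t))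
    (hVT : ∀ t, T < t → V t = 0) :
    ∫ τ, ∑ u ∈ Finset.Icc 1 T, stepDefect P V u (τ u) ∂μ = ∫ s, V 1 s ∂P0 := by
  have hg : IsBddMeasurable fun τ : ℕ → S × A => ∑ u ∈ Finset.Icc 1 T, stepDefect P V u (τ u) :=
    .finset_sum _ fun u _ => (isBddMeasurable_stepDefect hV u).comp (measurable_pi_apply u)
  rw [hμ.2 _ hg.1 hg.2]
  refine integral_congr_ae (.of_forall fun s => ?_)
  simpa using polExp_const_add_sum_stepDefect hV hVT 1 0 s

end Trajectory

section Equivalence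

variable {S A : Type*} [MeasurableSpace S] [MeasurableSpace A] [Nonempty S] [Nonempty A]
  {T : ℕ} {P : ℕ → Kernel (S × A) S} [∀ t, IsMarkovKernel (P t)]
  {ν : Measure A} [IsFiniteMeasure ν] [NeZero ν] {β : ℝ} {r : ℕ → S → A → ℝ}

theorem integral_neg_sum_log_piStar (hβ : 0 < β) (hr : IsBddReward r) {P0 : Measure S}
    {piE : ℕ → Kernel S A} [∀ t, IsMarkovKernel (piE t)] {PE : Measure (ℕ → S × A)}
    (hPE : IsTrajLaw T P P0 piE PE) :
    ∫ τ, (- ∑ t ∈ Finset.Icc 1 T, Real.log (piStar T P ν β r t (τ t).1 (τ t).2)) ∂PE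
      = β⁻¹ * (Jstar T P ν P0 β r - ∫ τ, (∑ t ∈ Finset.Icc 1 T, r t (τ t).1 (τ t).2) ∂PE) := by
  have := hPE.1
  have hV := isBddMeasurable_Vstar (T := T) (P := P) (ν := ν) hβ hr
  have hD : IsBddMeasurable fun τ : ℕ → S × A =>
      ∑ t ∈ Finset.Icc 1 T, stepDefect P (Vstar T P ν β r) t (τ t) :=
    .finset_sum _ fun t _ => (isBddMeasurable_stepDefect hV t).comp (measurable_pi_apply t)
  have hR : IsBddMeasurable fun τ : ℕ → S × A => ∑ t ∈ Finset.Icc 1 T, r t (τ t).1 (τ t).2 :=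
    .finset_sum _ fun t _ => (hr.isBddMeasurable t).comp (measurable_pi_apply t)
  simp_rw [← Finset.sum_neg_distrib, neg_log_piStar, ← Finset.mul_sum, Finset.sum_sub_distrib]
  rw [integral_const_mul, integral_sub (hD.integrable PE) (hR.integrable PE),
    hPE.integral_sum_stepDefect hV fun t ht => funext (Vstar_of_lt ht), Jstar]

end Equivalence

end IRL

open MeasureTheory ProbabilityTheory Real
open scoped ENNReal

theorem mle_minmax_irl_population_equivalence_general
    {S A : Type*} [MeasurableSpace S] [MeasurableSpace A] [Nonempty S] [Nonempty A]
    (T : ℕ)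
    (P0 : Measure S)
    (P : ℕ → Kernel (S × A) S) [∀ t, IsMarkovKernel (P t)]
    (ν : Measure A) [IsFiniteMeasure ν] (hν : ν Set.univ ≠ 0)
    (β : ℝ) (hβ : 0 < β)
    -- the expert: an arbitrary Markov policy, with trajectory law `PE`
    (piE : ℕ → Kernel S A) [∀ t, IsMarkovKernel (piE t)]
    (PE : Measure (ℕ → S × A)) (hPE : IRL.IsTrajLaw T P P0 piE PE) :
    -- population MLE risk of `π*_r` equals `β⁻¹` times the population Min-Max-IRL risk of `r`
    (∀ r : ℕ → S → A → ℝ, IRL.IsBddReward r →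
      ∫ τ, (- ∑ t ∈ Finset.Icc 1 T, Real.log (IRL.piStar T P ν β r t (τ t).1 (τ t).2)) ∂PE
        = β⁻¹ * (IRL.Jstar T P ν P0 β r
            - ∫ τ, (∑ t ∈ Finset.Icc 1 T, r t (τ t).1 (τ t).2) ∂PE)) ∧
    -- in particular, over any reward class the two problems have the same minimizers
    (∀ R : Set (ℕ → S → A → ℝ), (∀ r ∈ R, IRL.IsBddReward r) → ∀ r₀ ∈ R,
      ((∀ r ∈ R,
          IRL.Jstar T P ν P0 β r₀ - ∫ τ, (∑ t ∈ Finset.Icc 1 T, r₀ t (τ t).1 (τ t).2) ∂PE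
            ≤ IRL.Jstar T P ν P0 β r - ∫ τ, (∑ t ∈ Finset.Icc 1 T, r t (τ t).1 (τ t).2) ∂PE)
        ↔ (∀ r ∈ R,
          ∫ τ, (- ∑ t ∈ Finset.Icc 1 T,
              Real.log (IRL.piStar T P ν β r₀ t (τ t).1 (τ t).2)) ∂PE
            ≤ ∫ τ, (- ∑ t ∈ Finset.Icc 1 T,
              Real.log (IRL.piStar T P ν β r t (τ t).1 (τ t).2)) ∂PE))) := by
  have : NeZero ν := ⟨Measure.measure_univ_ne_zero.1 hν⟩
  have hrisk := fun r (hr : IRL.IsBddReward r) =>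
    IRL.integral_neg_sum_log_piStar (ν := ν) hβ hr hPE
  refine ⟨hrisk, fun R hR r₀ hr₀ => forall₂_congr fun r hr => ?_⟩
  rw [hrisk r₀ (hR r₀ hr₀), hrisk r (hR r hr), mul_le_mul_iff_right₀ (inv_pos.2 hβ)]

/-- **Population-level equivalence of MLE and Min-Max-IRL** (Theorem 1, part 1, population
level). For any expert Markov policy `π^E` with trajectory law `P^{π^E}`, and every bounded
measurable reward `r`, `L^MLE(π*_r) = β⁻¹ L^IRL(r)`; in particular, over any reward class `R`
the two problems have the same minimizers under `r ↦ π*_r`. -/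
theorem mle_minmax_irl_population_equivalence
    {S A : Type*} [MeasurableSpace S] [MeasurableSpace A] [Nonempty S] [Nonempty A]
    (T : ℕ) (hT : 1 ≤ T)
    (P0 : Measure S) [IsProbabilityMeasure P0]
    (P : ℕ → Kernel (S × A) S) [∀ t, IsMarkovKernel (P t)]
    (ν : Measure A) [IsFiniteMeasure ν] (hν : ν Set.univ ≠ 0)
    (β : ℝ) (hβ : 0 < β)
    -- the expert: an arbitrary Markov policy, with trajectory law `PE`
    (piE : ℕ → Kernel S A) [∀ t, IsMarkovKernel (piE t)]
    (PE : Measure (ℕ → S × A)) (hPE : IRL.IsTrajLaw T P P0 piE PE) :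
    -- population MLE risk of `π*_r` equals `β⁻¹` times the population Min-Max-IRL risk of `r`
    (∀ r : ℕ → S → A → ℝ, IRL.IsBddReward r →
      ∫ τ, (- ∑ t ∈ Finset.Icc 1 T, Real.log (IRL.piStar T P ν β r t (τ t).1 (τ t).2)) ∂PE
        = β⁻¹ * (IRL.Jstar T P ν P0 β r
            - ∫ τ, (∑ t ∈ Finset.Icc 1 T, r t (τ t).1 (τ t).2) ∂PE)) ∧
    -- in particular, over any reward class the two problems have the same minimizers
    (∀ R : Set (ℕ → S → A → ℝ), (∀ r ∈ R, IRL.IsBddReward r) → ∀ r₀ ∈ R,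
      ((∀ r ∈ R,
          IRL.Jstar T P ν P0 β r₀ - ∫ τ, (∑ t ∈ Finset.Icc 1 T, r₀ t (τ t).1 (τ t).2) ∂PE
            ≤ IRL.Jstar T P ν P0 β r - ∫ τ, (∑ t ∈ Finset.Icc 1 T, r t (τ t).1 (τ t).2) ∂PE)
        ↔ (∀ r ∈ R,
          ∫ τ, (- ∑ t ∈ Finset.Icc 1 T,
              Real.log (IRL.piStar T P ν β r₀ t (τ t).1 (τ t).2)) ∂PE
            ≤ ∫ τ, (- ∑ t ∈ Finset.Icc 1 T,
              Real.log (IRL.piStar T P ν β r t (τ t).1 (τ t).2)) ∂PE))) :=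
  mle_minmax_irl_population_equivalence_general T P0 P ν hν β hβ piE PE hPE
end
end

section
/- MLE as Min-Max-IRL over log-policy rewards (Theorem 1, part 2): Let π = (π_t)_{t=1}^T be a Markov policy such that each kernel π_t(·|s) has a ν-density π_t(a|s) with log π_t bounded and jointly measurable, and define the reward r := (β log π_t)_{t=1}^T. Then: (i) the soft-optimal policy for r equals π, i.e. π*_r = π; (ii) V*_{t,r} ≡ 0 for all t = 1,…,T, and in particular J*(r) = 0; and (iii) for every trajectory τ = (s₁,a₁,…,s_T,a_T), −Σ_{t=1}^T log π_t(a_t|s_t) = β^{−1} ( J*(r) − Σ_{t=1}^T r_t(s_t,a_t) ). Hence MLE over a policy class Π with such densities is equivalent to Min-Max-IRL over the reward class β log Π := { (β log π_t)_{t=1}^T : π ∈ Π } at both the population and the empirical level. -/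
open MeasureTheory ProbabilityTheory Real
open scoped ENNReal RealInnerProductSpace

noncomputable section

/- With `r = β log π` the soft Bellman backup reads `V*_t(s) = β log ∫ π_t(a|s) ν(da) = β log 1 = 0`
as soon as `V*_{t+1} ≡ 0`, so backward induction gives `V* ≡ 0`; hence `Q*_t = r_t`,
`π*_t = exp (r_t / β) = π_t` and `J*(r) = 0`. The Min-Max-IRL loss `β⁻¹ (J*(r) - ∑ r_t)` is then
literally the negative log-likelihood of each trajectory, and so also after averaging over a
dataset or integrating against any trajectory law. -/

namespace IRL

variable {S A : Type*} {T : ℕ} {β : ℝ} {p : ℕ → S → A → ℝ}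

def logPolicyReward (β : ℝ) (p : ℕ → S → A → ℝ) : ℕ → S → A → ℝ :=
  fun t s a => β * Real.log (p t s a)

theorem sum_logPolicyReward (I : Finset ℕ) (τ : ℕ → S × A) :
    ∑ t ∈ I, logPolicyReward β p t (τ t).1 (τ t).2
      = β * ∑ t ∈ I, Real.log (p t (τ t).1 (τ t).2) :=
  (Finset.mul_sum _ _ _).symm

variable [MeasurableSpace S] [MeasurableSpace A] {P : ℕ → Kernel (S × A) S} {ν : Measure A}

theorem Vstar_logPolicyReward (hβ : β ≠ 0) (hpos : ∀ t s a, 0 < p t s a)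
    (hnorm : ∀ t s, ∫ a, p t s a ∂ν = 1) (t : ℕ) (s : S) :
    Vstar T P ν β (logPolicyReward β p) t s = 0 := by
  rw [Vstar]
  split_ifs
  · rfl
  · have hnext : ∀ s', Vstar T P ν β (logPolicyReward β p) (t + 1) s' = 0 :=
      Vstar_logPolicyReward hβ hpos hnorm (t + 1)
    simp only [hnext, integral_zero, add_zero, logPolicyReward, mul_div_cancel_left₀ _ hβ,
      exp_log (hpos _ _ _), hnorm, log_one, mul_zero]
termination_by T + 1 - t

theorem piStar_logPolicyReward (hβ : β ≠ 0) (hpos : ∀ t s a, 0 < p t s a)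
    (hnorm : ∀ t s, ∫ a, p t s a ∂ν = 1) (t : ℕ) (s : S) (a : A) :
    piStar T P ν β (logPolicyReward β p) t s a = p t s a := by
  simp only [piStar, Qstar, Vstar_logPolicyReward hβ hpos hnorm, integral_zero, add_zero,
    sub_zero, logPolicyReward, mul_div_cancel_left₀ _ hβ, exp_log (hpos t s a)]

theorem Jstar_logPolicyReward (P0 : Measure S) (hβ : β ≠ 0) (hpos : ∀ t s a, 0 < p t s a)
    (hnorm : ∀ t s, ∫ a, p t s a ∂ν = 1) :
    Jstar T P ν P0 β (logPolicyReward β p) = 0 := by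
  simp only [Jstar, Vstar_logPolicyReward hβ hpos hnorm, integral_zero]

end IRL

open MeasureTheory ProbabilityTheory Real
open scoped ENNReal

theorem mle_as_minmax_irl_over_log_policy_rewards_general
    {S A : Type*} [MeasurableSpace S] [MeasurableSpace A] [Nonempty S] [Nonempty A]
    (T : ℕ)
    (P0 : Measure S)
    (P : ℕ → Kernel (S × A) S)
    (ν : Measure A)
    (β : ℝ) (hβ : 0 < β)
    (p : ℕ → S → A → ℝ) (hp : IRL.IsPolicyDensity ν p) (hlog : IRL.HasBddLogDensity p)
    (r : ℕ → S → A → ℝ) (hr : r = fun t s a => β * Real.log (p t s a)) :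
    -- (i) the soft-optimal policy for `r` is `π` itself
    (∀ t, 1 ≤ t → t ≤ T → ∀ s a, IRL.piStar T P ν β r t s a = p t s a) ∧
    -- (ii) `V*_{t,r} ≡ 0` and `J*(r) = 0`
    (∀ t, 1 ≤ t → t ≤ T → ∀ s, IRL.Vstar T P ν β r t s = 0) ∧
    IRL.Jstar T P ν P0 β r = 0 ∧
    -- (iii) pointwise identity of the MLE and Min-Max-IRL trajectory losses
    (∀ τ : ℕ → S × A,
      -∑ t ∈ Finset.Icc 1 T, Real.log (p t (τ t).1 (τ t).2)
        = β⁻¹ * (IRL.Jstar T P ν P0 β r - ∑ t ∈ Finset.Icc 1 T, r t (τ t).1 (τ t).2)) ∧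
    -- equivalence at the empirical level, for any finite dataset of trajectories
    (∀ n : ℕ, 1 ≤ n → ∀ D : Fin n → (ℕ → S × A),
      (n : ℝ)⁻¹ * ∑ i : Fin n,
          (- ∑ t ∈ Finset.Icc 1 T, Real.log (p t (D i t).1 (D i t).2))
        = β⁻¹ * (IRL.Jstar T P ν P0 β r
            - (n : ℝ)⁻¹ * ∑ i : Fin n, ∑ t ∈ Finset.Icc 1 T, r t (D i t).1 (D i t).2)) ∧
    -- equivalence at the population level, for any expert policy
    (∀ piE : ℕ → Kernel S A, (∀ t, IsMarkovKernel (piE t)) →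
      ∀ PE : Measure (ℕ → S × A), IRL.IsTrajLaw T P P0 piE PE →
      ∫ τ, (-∑ t ∈ Finset.Icc 1 T, Real.log (p t (τ t).1 (τ t).2)) ∂PE
        = β⁻¹ * (IRL.Jstar T P ν P0 β r
            - ∫ τ, (∑ t ∈ Finset.Icc 1 T, r t (τ t).1 (τ t).2) ∂PE)) := by
  have hr' : r = IRL.logPolicyReward β p := hr
  subst hr'
  have hpos : ∀ t s a, 0 < p t s a := fun t => (hlog t).1
  have hJ := IRL.Jstar_logPolicyReward (T := T) (P := P) P0 hβ.ne' hpos hp.2.2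
  refine ⟨fun t _ _ => IRL.piStar_logPolicyReward hβ.ne' hpos hp.2.2 t,
    fun t _ _ => IRL.Vstar_logPolicyReward hβ.ne' hpos hp.2.2 t, hJ, ?_, ?_, ?_⟩
  all_goals
    intros
    simp only [hJ, IRL.sum_logPolicyReward, ← Finset.mul_sum, Finset.sum_neg_distrib,
      integral_const_mul, integral_neg]
    field_simp
    ring

/-- **MLE as Min-Max-IRL over log-policy rewards** (Theorem 1, part 2). For a Markov policy
`π` with bounded log-`ν`-densities and the reward `r := β log π`: (i) `π*_r = π`;
(ii) `V*_{t,r} ≡ 0` and `J*(r) = 0`; (iii) the MLE and Min-Max-IRL trajectory losses coincide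
pointwise, hence the two problems are equivalent at both the population and the empirical
level. -/
theorem mle_as_minmax_irl_over_log_policy_rewards
    {S A : Type*} [MeasurableSpace S] [MeasurableSpace A] [Nonempty S] [Nonempty A]
    (T : ℕ) (hT : 1 ≤ T)
    (P0 : Measure S) [IsProbabilityMeasure P0]
    (P : ℕ → Kernel (S × A) S) [∀ t, IsMarkovKernel (P t)]
    (ν : Measure A) [IsFiniteMeasure ν] (hν : ν Set.univ ≠ 0)
    (β : ℝ) (hβ : 0 < β)
    (p : ℕ → S → A → ℝ) (hp : IRL.IsPolicyDensity ν p) (hlog : IRL.HasBddLogDensity p)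
    (r : ℕ → S → A → ℝ) (hr : r = fun t s a => β * Real.log (p t s a)) :
    -- (i) the soft-optimal policy for `r` is `π` itself
    (∀ t, 1 ≤ t → t ≤ T → ∀ s a, IRL.piStar T P ν β r t s a = p t s a) ∧
    -- (ii) `V*_{t,r} ≡ 0` and `J*(r) = 0`
    (∀ t, 1 ≤ t → t ≤ T → ∀ s, IRL.Vstar T P ν β r t s = 0) ∧
    IRL.Jstar T P ν P0 β r = 0 ∧
    -- (iii) pointwise identity of the MLE and Min-Max-IRL trajectory losses
    (∀ τ : ℕ → S × A,
      -∑ t ∈ Finset.Icc 1 T, Real.log (p t (τ t).1 (τ t).2)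
        = β⁻¹ * (IRL.Jstar T P ν P0 β r - ∑ t ∈ Finset.Icc 1 T, r t (τ t).1 (τ t).2)) ∧
    -- equivalence at the empirical level, for any finite dataset of trajectories
    (∀ n : ℕ, 1 ≤ n → ∀ D : Fin n → (ℕ → S × A),
      (n : ℝ)⁻¹ * ∑ i : Fin n,
          (- ∑ t ∈ Finset.Icc 1 T, Real.log (p t (D i t).1 (D i t).2))
        = β⁻¹ * (IRL.Jstar T P ν P0 β r
            - (n : ℝ)⁻¹ * ∑ i : Fin n, ∑ t ∈ Finset.Icc 1 T, r t (D i t).1 (D i t).2)) ∧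
    -- equivalence at the population level, for any expert policy
    (∀ piE : ℕ → Kernel S A, (∀ t, IsMarkovKernel (piE t)) →
      ∀ PE : Measure (ℕ → S × A), IRL.IsTrajLaw T P P0 piE PE →
      ∫ τ, (-∑ t ∈ Finset.Icc 1 T, Real.log (p t (τ t).1 (τ t).2)) ∂PE
        = β⁻¹ * (IRL.Jstar T P ν P0 β r
            - ∫ τ, (∑ t ∈ Finset.Icc 1 T, r t (τ t).1 (τ t).2) ∂PE)) :=
  mle_as_minmax_irl_over_log_policy_rewards_general T P0 P ν β hβ p hp hlog r hr
end
end

section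
/- Non-quasiconvexity of the MLE-IRL empirical loss (Proposition convexity, part 2, explicit witness): Define f : ℝ² → ℝ by f(θ_x, θ_y) = log( 1 + exp( (1/2)( log(1 + e^{θ_y}) − log(1 + e^{θ_x}) ) ) ) + log(1 + e^{−θ_y}). Then f(−1, 3) > f(2, 4) and f(−1, 3) > f(−4, 2). Since (−1,3) = ((2,4) + (−4,2))/2, the function f — which is the negative log-likelihood L̂₁^MLE(π*_{r_θ}) of a single trajectory in an explicit two-state, two-action, horizon-2 MDP with stochastic transitions and β = 1 — is not quasiconvex, and in particular not convex. -/
open Real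
set_option maxHeartbeats 1000000

private lemma exp_half_log_sub (A B : ℝ) (hA : 0 < A) (hB : 0 < B) :
    Real.exp ((1 / 2) * (Real.log A - Real.log B)) = Real.sqrt (A / B) := by
  rw [Real.sqrt_eq_rpow, Real.rpow_def_of_pos (by positivity),
    Real.log_div hA.ne' hB.ne']
  ring_nf

/-- **Non-quasiconvexity of the MLE-IRL empirical loss** (Proposition `convexity`, part 2,
explicit witness). `f` is the negative log-likelihood `L̂₁^MLE(π*_{r_θ})` of the single
trajectory `(x, b, y, a)` in the explicit two-state, two-action, horizon-2 MDP with stochastic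
transitions and `β = 1`. It satisfies `f(-1,3) > f(2,4)` and `f(-1,3) > f(-4,2)`, and since
`(-1,3)` is the midpoint of `(2,4)` and `(-4,2)`, `f` is neither quasiconvex nor convex. -/
theorem mle_irl_loss_not_quasiconvex
    (f : ℝ × ℝ → ℝ)
    (hf : f = fun θ =>
      Real.log (1 + Real.exp ((1 / 2) *
        (Real.log (1 + Real.exp θ.2) - Real.log (1 + Real.exp θ.1))))
      + Real.log (1 + Real.exp (-θ.2))) :
    f (-1, 3) > f (2, 4) ∧
    f (-1, 3) > f (-4, 2) ∧
    ((-1, 3) : ℝ × ℝ) = ((1 : ℝ) / 2) • ((2, 4) : ℝ × ℝ) + ((1 : ℝ) / 2) • ((-4, 2) : ℝ × ℝ) ∧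
    ¬ QuasiconvexOn ℝ Set.univ f ∧
    ¬ ConvexOn ℝ Set.univ f := by
  have heg := Real.exp_one_gt_d9
  have hel := Real.exp_one_lt_d9
  have he2l : (7.38905609 : ℝ) < Real.exp 2 := by
    have : Real.exp 2 = Real.exp 1 * Real.exp 1 := by
      rw [← Real.exp_add]; norm_num
    nlinarith
  have he2u : Real.exp 2 < 7.3890561 := by
    have : Real.exp 2 = Real.exp 1 * Real.exp 1 := by
      rw [← Real.exp_add]; norm_num
    nlinarith
  have he3l : (20.085 : ℝ) < Real.exp 3 := by
    have h3 : Real.exp 3 = Real.exp 1 * Real.exp 2 := by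
      rw [← Real.exp_add]; norm_num
    nlinarith
  have he3u : Real.exp 3 < 20.086 := by
    have h3 : Real.exp 3 = Real.exp 1 * Real.exp 2 := by
      rw [← Real.exp_add]; norm_num
    nlinarith
  have he4l : (54.598 : ℝ) < Real.exp 4 := by
    have h4 : Real.exp 4 = Real.exp 2 * Real.exp 2 := by
      rw [← Real.exp_add]; norm_num
    nlinarith
  have he4u : Real.exp 4 < 54.645 := by
    have h4 : Real.exp 4 = Real.exp 2 * Real.exp 2 := by
      rw [← Real.exp_add]; norm_num
    nlinarith
  have hem1u : Real.exp (-1) < 0.368 := by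
    rw [Real.exp_neg]
    rw [inv_lt_comm₀ (Real.exp_pos 1) (by norm_num)]
    nlinarith
  have hem2u : Real.exp (-2) < 0.136 := by
    rw [Real.exp_neg]
    rw [inv_lt_comm₀ (Real.exp_pos 2) (by norm_num)]
    nlinarith
  have hem4l : (0.0182 : ℝ) < Real.exp (-4) := by
    rw [Real.exp_neg]
    rw [lt_inv_comm₀ (by norm_num) (Real.exp_pos 4)]
    nlinarith
  -- positivity facts
  have pA1 : (0:ℝ) < 1 + Real.exp 3 := by positivity
  have pB1 : (0:ℝ) < 1 + Real.exp (-1) := by positivity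
  have pA2 : (0:ℝ) < 1 + Real.exp 4 := by positivity
  have pB2 : (0:ℝ) < 1 + Real.exp 2 := by positivity
  have pA3 : (0:ℝ) < 1 + Real.exp 2 := by positivity
  have pB3 : (0:ℝ) < 1 + Real.exp (-4) := by positivity
  have hfv1 : f (-1, 3) = Real.log (1 + Real.sqrt ((1 + Real.exp 3) / (1 + Real.exp (-1))))
      + Real.log (1 + Real.exp (-3)) := by
    simp only [hf]
    rw [exp_half_log_sub _ _ pA1 pB1]
  have hfv2 : f (2, 4) = Real.log (1 + Real.sqrt ((1 + Real.exp 4) / (1 + Real.exp 2)))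
      + Real.log (1 + Real.exp (-4)) := by
    simp only [hf]
    rw [exp_half_log_sub _ _ pA2 pB2]
  have hfv3 : f (-4, 2) = Real.log (1 + Real.sqrt ((1 + Real.exp 2) / (1 + Real.exp (-4))))
      + Real.log (1 + Real.exp (-2)) := by
    simp only [hf]
    rw [exp_half_log_sub _ _ pA3 pB3]
  -- lower bound on sqrt R1
  have hs1 : (3.9:ℝ) < Real.sqrt ((1 + Real.exp 3) / (1 + Real.exp (-1))) := by
    rw [show (3.9:ℝ) = Real.sqrt (3.9^2) by rw [Real.sqrt_sq]; norm_num]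
    apply Real.sqrt_lt_sqrt (by positivity)
    rw [lt_div_iff₀ pB1]
    nlinarith [Real.exp_pos (-1)]
  -- upper bound on sqrt R3
  have hs3 : Real.sqrt ((1 + Real.exp 2) / (1 + Real.exp (-4))) < 2.88 := by
    rw [show (2.88:ℝ) = Real.sqrt (2.88^2) by rw [Real.sqrt_sq]; norm_num]
    apply Real.sqrt_lt_sqrt (by positivity)
    rw [div_lt_iff₀ pB3]
    nlinarith
  have h1 : f (-1, 3) > f (2, 4) := by
    rw [hfv1, hfv2]
    apply add_lt_add
    · apply Real.log_lt_log (by positivity)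
      have : (1 + Real.exp 4) / (1 + Real.exp 2)
          < (1 + Real.exp 3) / (1 + Real.exp (-1)) := by
        rw [div_lt_div_iff₀ pB2 pB1]
        nlinarith [Real.exp_pos (-1)]
      linarith [Real.sqrt_lt_sqrt (le_of_lt (by positivity :
        (0:ℝ) < (1 + Real.exp 4) / (1 + Real.exp 2))) this]
    · apply Real.log_lt_log (by positivity)
      have : Real.exp (-4) < Real.exp (-3) := Real.exp_lt_exp.2 (by norm_num)
      linarith
  have h2 : f (-1, 3) > f (-4, 2) := by
    rw [hfv1, hfv3]
    rw [← Real.log_mul (by positivity) (by positivity),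
        ← Real.log_mul (by positivity) (by positivity)]
    apply Real.log_lt_log (by positivity)
    have hp2 : (0:ℝ) < Real.exp (-2) := Real.exp_pos _
    have hp3 : (0:ℝ) < Real.exp (-3) := Real.exp_pos _
    have hsn : (0:ℝ) ≤ Real.sqrt ((1 + Real.exp 2) / (1 + Real.exp (-4))) :=
      Real.sqrt_nonneg _
    have hlt1 : (1 + Real.sqrt ((1 + Real.exp 2) / (1 + Real.exp (-4))))
        * (1 + Real.exp (-2)) < 3.88 * 1.136 :=
      mul_lt_mul'' (by linarith) (by linarith) (by positivity) (by positivity)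
    have hlt2 : (4.9:ℝ) * 1 < (1 + Real.sqrt ((1 + Real.exp 3) / (1 + Real.exp (-1))))
        * (1 + Real.exp (-3)) :=
      mul_lt_mul'' (by linarith) (by linarith) (by norm_num) (by norm_num)
    linarith
  have hmid : ((-1, 3) : ℝ × ℝ)
      = ((1 : ℝ) / 2) • ((2, 4) : ℝ × ℝ) + ((1 : ℝ) / 2) • ((-4, 2) : ℝ × ℝ) := by
    simp [Prod.ext_iff]; norm_num
  have hq : ¬ QuasiconvexOn ℝ Set.univ f := by
    intro h
    have hc := h (max (f (2, 4)) (f (-4, 2)))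
    have hm1 : ((2,4) : ℝ × ℝ) ∈ {x ∈ (Set.univ : Set (ℝ × ℝ)) |
        f x ≤ max (f (2, 4)) (f (-4, 2))} := ⟨Set.mem_univ _, le_max_left _ _⟩
    have hm2 : ((-4,2) : ℝ × ℝ) ∈ {x ∈ (Set.univ : Set (ℝ × ℝ)) |
        f x ≤ max (f (2, 4)) (f (-4, 2))} := ⟨Set.mem_univ _, le_max_right _ _⟩
    have hmem := hc hm1 hm2
      (by norm_num : (0:ℝ) ≤ 1/2) (by norm_num : (0:ℝ) ≤ 1/2) (by norm_num)
    rw [← hmid] at hmem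
    have := hmem.2
    rcases max_cases (f (2,4)) (f (-4,2)) with ⟨hmx, _⟩ | ⟨hmx, _⟩ <;>
      rw [hmx] at this <;> linarith
  exact ⟨h1, h2, hmid, hq, fun h => hq (h.quasiconvexOn)⟩
end

section
/- Donsker–Varadhan / Gibbs variational principle (Lemma donsker): Let A be a standard Borel space, ν a finite measure on A with 0 < ν(A) < ∞, β > 0, and f : A → ℝ bounded measurable. Then β log ∫_A e^{f(a)/β} ν(da) = max_{P ∈ Δ(A)} ( ∫ f dP + β H(P) ), and the maximum is attained uniquely at the Gibbs measure P* with ν-density dP*/dν(a) = e^{f(a)/β} / ∫_A e^{f/β} dν. -/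
open MeasureTheory Real
open scoped ENNReal

/-! Tilting `ν` by `g = f / β` gives the Gibbs measure `P*`, and for every `P ≪ ν` the chain rule
for log-likelihood ratios gives
`∫ g dP - ∫ log (dP/dν) dP = log ∫ e^g dν - KL(P ‖ P*)`.
Gibbs' inequality `KL(P ‖ P*) ≥ 0`, with equality only for `P = P*`, yields both the bound and
the uniqueness of the maximiser; multiplying by `β` gives the statement. -/

open InformationTheory

namespace MeasureTheory

variable {α : Type*} {mα : MeasurableSpace α}

lemma integral_llr_nonneg {μ ν : Measure α} [IsProbabilityMeasure μ] [IsProbabilityMeasure ν]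
    (hμν : μ ≪ ν) : 0 ≤ ∫ x, llr μ ν x ∂μ := by
  rw [← toReal_klDiv_of_measure_eq hμν (by simp)]
  exact ENNReal.toReal_nonneg

lemma eq_of_integral_llr_eq_zero {μ ν : Measure α} [IsProbabilityMeasure μ]
    [IsProbabilityMeasure ν] (hμν : μ ≪ ν) (h_int : Integrable (llr μ ν) μ)
    (h : ∫ x, llr μ ν x ∂μ = 0) : μ = ν := by
  rw [← toReal_klDiv_of_measure_eq hμν (by simp), ENNReal.toReal_eq_zero_iff] at h
  exact klDiv_eq_zero_iff.1 (h.resolve_right (klDiv_ne_top hμν h_int))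

lemma integral_sub_integral_llr_eq_log_integral_exp_sub {μ ν : Measure α}
    [IsProbabilityMeasure μ] [SigmaFinite ν] {g : α → ℝ} (hμν : μ ≪ ν) (hgμ : Integrable g μ)
    (hgν : Integrable (fun x ↦ exp (g x)) ν) (h_int : Integrable (llr μ ν) μ) :
    ∫ x, g x ∂μ - ∫ x, llr μ ν x ∂μ
      = log (∫ x, exp (g x) ∂ν) - ∫ x, llr μ (ν.tilted g) x ∂μ := by
  rw [integral_llr_tilted_right hμν hgμ hgν h_int]
  ring

lemma integral_sub_integral_llr_tilted_self {ν : Measure α} [SigmaFinite ν] [NeZero ν]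
    {g : α → ℝ} (hgν : Integrable (fun x ↦ exp (g x)) ν) (hg : Integrable g (ν.tilted g)) :
    ∫ x, g x ∂ν.tilted g - ∫ x, llr (ν.tilted g) ν x ∂ν.tilted g
      = log (∫ x, exp (g x) ∂ν) := by
  have := isProbabilityMeasure_tilted hgν
  rw [llr_def, integral_congr_ae ((tilted_absolutelyContinuous ν g).ae_le
      (log_rnDeriv_tilted_left_self hgν)), integral_sub hg (integrable_const _),
    integral_const, probReal_univ, one_smul]
  ring

end MeasureTheory

theorem donsker_varadhan_general
    {A : Type*} [MeasurableSpace A]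
    (ν : Measure A) [IsFiniteMeasure ν] (hν : ν Set.univ ≠ 0)
    (β : ℝ) (hβ : 0 < β)
    (f : A → ℝ) (hf : Measurable f) (hfb : ∃ C, ∀ a, |f a| ≤ C) :
    ∃ Pstar : Measure A,
      Pstar = ν.withDensity (fun a => ENNReal.ofReal
        (Real.exp (f a / β) / ∫ a', Real.exp (f a' / β) ∂ν)) ∧
      IsProbabilityMeasure Pstar ∧
      -- the Gibbs measure attains the value `β log ∫ e^{f/β} dν`
      (∫ a, f a ∂Pstar) + β * (- ∫ a, Real.log ((Pstar.rnDeriv ν a).toReal) ∂Pstar)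
        = β * Real.log (∫ a, Real.exp (f a / β) ∂ν) ∧
      -- all other `P ∈ Δ(A)` with `P ≪ ν` and well-defined entropy attain at most this value,
      -- with equality only at the Gibbs measure
      ∀ P : Measure A, IsProbabilityMeasure P → P ≪ ν →
        Integrable (fun a => Real.log ((P.rnDeriv ν a).toReal)) P →
          ((∫ a, f a ∂P) + β * (- ∫ a, Real.log ((P.rnDeriv ν a).toReal) ∂P)
              ≤ β * Real.log (∫ a, Real.exp (f a / β) ∂ν)) ∧
          ((∫ a, f a ∂P) + β * (- ∫ a, Real.log ((P.rnDeriv ν a).toReal) ∂P)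
              = β * Real.log (∫ a, Real.exp (f a / β) ∂ν) → P = Pstar) := by
  obtain ⟨C, hC⟩ := hfb
  have : NeZero ν := ⟨Measure.measure_univ_ne_zero.1 hν⟩
  set g : A → ℝ := fun a ↦ f a / β
  have hg_int (P : Measure A) [IsFiniteMeasure P] : Integrable g P :=
    (Integrable.of_bound hf.aestronglyMeasurable C (ae_of_all _ hC)).div_const β
  have hexp : Integrable (fun a ↦ exp (g a)) ν :=
    Integrable.of_bound (hf.div_const β).exp.aestronglyMeasurable (exp (C / β)) <|
      ae_of_all _ fun a ↦ by
        rw [norm_of_nonneg (exp_pos _).le, exp_le_exp]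
        exact div_le_div_of_nonneg_right (le_of_abs_le (hC a)) hβ.le
  have hscale (P : Measure A) :
      (∫ a, f a ∂P) + β * (- ∫ a, Real.log ((P.rnDeriv ν a).toReal) ∂P)
        = β * (∫ a, g a ∂P - ∫ a, llr P ν a ∂P) := by
    rw [integral_div, mul_sub, mul_div_cancel₀ _ hβ.ne', llr_def]
    ring
  have := isProbabilityMeasure_tilted hexp
  refine ⟨ν.tilted g, rfl, this, ?_, fun P _ hPν h_int ↦ ?_⟩
  · rw [hscale, integral_sub_integral_llr_tilted_self hexp (hg_int _)]
  have hPtilt : P ≪ ν.tilted g := hPν.trans (absolutelyContinuous_tilted hexp)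
  rw [hscale, integral_sub_integral_llr_eq_log_integral_exp_sub hPν (hg_int P) hexp h_int]
  refine ⟨mul_le_mul_of_nonneg_left (sub_le_self _ (integral_llr_nonneg hPtilt)) hβ.le,
    fun h ↦ eq_of_integral_llr_eq_zero hPtilt
      (integrable_llr_tilted_right hPν (hg_int P) h_int hexp) ?_⟩
  linarith [mul_left_cancel₀ hβ.ne' h]

/-- **Donsker–Varadhan / Gibbs variational principle** (Lemma `donsker`).
For a finite nonzero measure `ν` on a standard Borel space `A`, `β > 0`, and bounded
measurable `f : A → ℝ`,
`β log ∫ e^{f/β} dν = max_{P ∈ Δ(A)} (∫ f dP + β H(P))`, where for `P ≪ ν` with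
well-defined entropy, `H(P) = −∫ log (dP/dν) dP` (and `H(P) = −∞` otherwise, in which case
the inequality is vacuous). The maximum is attained uniquely at the Gibbs measure `P*` with
`ν`-density `e^{f/β} / ∫ e^{f/β} dν`. -/
theorem donsker_varadhan
    {A : Type*} [MeasurableSpace A] [StandardBorelSpace A]
    (ν : Measure A) [IsFiniteMeasure ν] (hν : ν Set.univ ≠ 0)
    (β : ℝ) (hβ : 0 < β)
    (f : A → ℝ) (hf : Measurable f) (hfb : ∃ C, ∀ a, |f a| ≤ C) :
    ∃ Pstar : Measure A,
      Pstar = ν.withDensity (fun a => ENNReal.ofReal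
        (Real.exp (f a / β) / ∫ a', Real.exp (f a' / β) ∂ν)) ∧
      IsProbabilityMeasure Pstar ∧
      -- the Gibbs measure attains the value `β log ∫ e^{f/β} dν`
      (∫ a, f a ∂Pstar) + β * (- ∫ a, Real.log ((Pstar.rnDeriv ν a).toReal) ∂Pstar)
        = β * Real.log (∫ a, Real.exp (f a / β) ∂ν) ∧
      -- all other `P ∈ Δ(A)` with `P ≪ ν` and well-defined entropy attain at most this value,
      -- with equality only at the Gibbs measure
      ∀ P : Measure A, IsProbabilityMeasure P → P ≪ ν →
        Integrable (fun a => Real.log ((P.rnDeriv ν a).toReal)) P →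
          ((∫ a, f a ∂P) + β * (- ∫ a, Real.log ((P.rnDeriv ν a).toReal) ∂P)
              ≤ β * Real.log (∫ a, Real.exp (f a / β) ∂ν)) ∧
          ((∫ a, f a ∂P) + β * (- ∫ a, Real.log ((P.rnDeriv ν a).toReal) ∂P)
              = β * Real.log (∫ a, Real.exp (f a / β) ∂ν) → P = Pstar) :=
  donsker_varadhan_general ν hν β hβ f hf hfb
end
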